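/- Every triangulation of a closed surface M with Euler characteristic χ(M) and n vertices satisfies n ≥ (7 + sqrt(49 - 24·χ(M)))/2. -/
import Mathlib


/-- The edges (2-element vertex subsets contained in some face) of a collection of faces. -/
def edgesOf {n : ℕ} (faces : Finset (Finset (Fin n))) : Finset (Finset (Fin n)) :=
  (Finset.univ.powersetCard 2).filter (fun e => ∃ f ∈ faces, e ⊆ f)

/-- A combinatorial triangulation of a closed surface on `n` vertices: a nonempty finite
collection of triangular faces such that every edge lies in exactly two faces, every vertex
lies in some face, the link of every vertex is connected (hence a single cycle), and the
whole complex is connected. -/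
structure CombSurface (n : ℕ) where
  faces : Finset (Finset (Fin n))
  nonempty : faces.Nonempty
  card_three : ∀ f ∈ faces, f.card = 3
  edge_in_two : ∀ e ∈ edgesOf faces, (faces.filter (fun f => e ⊆ f)).card = 2
  vertex_in : ∀ v : Fin n, ∃ f ∈ faces, v ∈ f
  link_connected : ∀ v u w : Fin n,
    ({v, u} : Finset (Fin n)) ∈ edgesOf faces →
    ({v, w} : Finset (Fin n)) ∈ edgesOf faces →
    Relation.ReflTransGen (fun a b => ({v, a, b} : Finset (Fin n)) ∈ faces) u w
  connected : ∀ u w : Fin n,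
    Relation.ReflTransGen (fun a b => ({a, b} : Finset (Fin n)) ∈ edgesOf faces) u w

/-- Euler characteristic of a combinatorial surface. -/
def eulerChar {n : ℕ} (S : CombSurface n) : ℤ :=
  (n : ℤ) - (edgesOf S.faces).card + S.faces.card

/-- Orientability: the faces can be given coherent orientations (ordered triples) so that
every directed edge is used by at most one oriented triangle. -/
def CombSurface.Orientable {n : ℕ} (S : CombSurface n) : Prop :=
  ∃ D : Finset (Fin n × Fin n × Fin n),
    (D.image fun t => ({t.1, t.2.1, t.2.2} : Finset (Fin n))) = S.faces ∧
    D.card = S.faces.card ∧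
    ∀ a b : Fin n,
      (D.filter (fun t =>
        (a, b) ∈ [(t.1, t.2.1), (t.2.1, t.2.2), (t.2.2, t.1)])).card ≤ 1

/-- Degree of a vertex: the number of edges containing it. -/
def degreeOf {n : ℕ} (S : CombSurface n) (v : Fin n) : ℕ :=
  ((edgesOf S.faces).filter (fun e => v ∈ e)).card


private lemma heawood_two_mul_edges {n : ℕ} (faces : Finset (Finset (Fin n)))
    (card_three : ∀ f ∈ faces, f.card = 3)
    (edge_in_two : ∀ e ∈ edgesOf faces, (faces.filter (fun f => e ⊆ f)).card = 2) :
    2 * (edgesOf faces).card = 3 * faces.card := by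
  have key : ∑ e ∈ edgesOf faces, (faces.filter (fun f => e ⊆ f)).card
      = ∑ f ∈ faces, ((edgesOf faces).filter (fun e => e ⊆ f)).card := by
    simp_rw [Finset.card_filter]
    exact Finset.sum_comm
  have hL : ∑ e ∈ edgesOf faces, (faces.filter (fun f => e ⊆ f)).card
      = 2 * (edgesOf faces).card := by
    rw [Finset.sum_congr rfl edge_in_two, Finset.sum_const, smul_eq_mul, mul_comm]
  have hR : ∑ f ∈ faces, ((edgesOf faces).filter (fun e => e ⊆ f)).card
      = 3 * faces.card := by
    have h : ∀ f ∈ faces, ((edgesOf faces).filter (fun e => e ⊆ f)).card = 3 := by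
      intro f hf
      have heq : (edgesOf faces).filter (fun e => e ⊆ f) = f.powersetCard 2 := by
        ext e
        simp only [edgesOf, Finset.mem_filter, Finset.mem_powersetCard]
        constructor
        · intro h; exact ⟨h.2, h.1.1.2⟩
        · intro h; exact ⟨⟨⟨Finset.subset_univ _, h.2⟩, ⟨f, hf, h.1⟩⟩, h.1⟩
      rw [heq, Finset.card_powersetCard, card_three f hf]
      decide
    rw [Finset.sum_congr rfl h, Finset.sum_const, smul_eq_mul, mul_comm]
  omega

private lemma heawood_four_le {n : ℕ} (S : CombSurface n) : 4 ≤ n := by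
  obtain ⟨f, hf⟩ := S.nonempty
  have h3 : f.card = 3 := S.card_three f hf
  have hn3 : 3 ≤ n := by
    have := Finset.card_le_univ f
    simpa [h3] using this
  rcases Nat.lt_or_ge n 4 with h | h
  · exfalso
    have hn : n = 3 := by omega
    subst hn
    have huniv : ∀ g ∈ S.faces, g = Finset.univ := by
      intro g hg
      apply Finset.eq_univ_of_card
      rw [S.card_three g hg]; rfl
    have hfaces : S.faces = {Finset.univ} := by
      apply Finset.eq_singleton_iff_nonempty_unique_mem.mpr
      exact ⟨S.nonempty, huniv⟩
    have he : ({0, 1} : Finset (Fin 3)) ∈ edgesOf S.faces := by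
      rw [edgesOf, Finset.mem_filter, Finset.mem_powersetCard]
      refine ⟨⟨Finset.subset_univ _, by decide⟩, f, hf, ?_⟩
      rw [huniv f hf]; exact Finset.subset_univ _
    have := S.edge_in_two _ he
    rw [hfaces] at this
    rw [Finset.filter_singleton] at this
    simp [Finset.subset_univ] at this
  · exact h

/-- Heawood's inequality: every triangulation of a closed surface with Euler
characteristic χ and n vertices satisfies n ≥ (7 + √(49 - 24χ))/2. -/
theorem heawood_inequality (n : ℕ) (S : CombSurface n) :
    (n : ℝ) ≥ (7 + Real.sqrt (49 - 24 * (eulerChar S : ℝ))) / 2 := by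
  set E := (edgesOf S.faces).card with hE
  set F := S.faces.card with hF
  have h23 : 2 * E = 3 * F := heawood_two_mul_edges S.faces S.card_three S.edge_in_two
  have hn4 : 4 ≤ n := heawood_four_le S
  have hEle : E ≤ n.choose 2 := by
    apply le_trans (Finset.card_le_card (Finset.filter_subset _ _))
    rw [Finset.card_powersetCard]
    simp
  have hch : 2 * n.choose 2 = n * (n - 1) := by
    rw [Nat.choose_two_right]
    apply Nat.mul_div_cancel'
    rcases Nat.even_or_odd n with h | h
    · exact (h.mul_right _).two_dvd
    · exact ((Nat.Odd.sub_odd h odd_one).mul_left _).two_dvd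
  have h2E : 2 * E ≤ n * (n - 1) := by omega
  -- key integer inequality : n^2 - 7n + 6χ ≥ 0
  have hkey : 0 ≤ (n : ℤ)^2 - 7 * n + 6 * eulerChar S := by
    have hχ : 6 * eulerChar S = 6 * (n : ℤ) - 2 * E := by
      rw [eulerChar]
      push_cast
      have : (2 : ℤ) * E = 3 * F := by exact_mod_cast h23
      linarith
    have h2E' : 2 * (E : ℤ) ≤ (n : ℤ) * (n - 1) := by
      have := h2E
      have hcast : ((n * (n - 1) : ℕ) : ℤ) = (n : ℤ) * ((n : ℤ) - 1) := by
        push_cast [Nat.cast_sub (by omega : 1 ≤ n)]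
        ring
      calc (2 : ℤ) * E = ((2 * E : ℕ) : ℤ) := by push_cast; ring
        _ ≤ ((n * (n - 1) : ℕ) : ℤ) := by exact_mod_cast h2E
        _ = (n : ℤ) * ((n : ℤ) - 1) := hcast
    nlinarith [hχ, h2E']
  have hn4' : (4 : ℝ) ≤ n := by exact_mod_cast hn4
  have hkeyR : 0 ≤ (n : ℝ)^2 - 7 * n + 6 * (eulerChar S : ℝ) := by
    exact_mod_cast hkey
  have hsqrt : Real.sqrt (49 - 24 * (eulerChar S : ℝ)) ≤ 2 * n - 7 := by
    have h1 : (49 : ℝ) - 24 * (eulerChar S : ℝ) ≤ (2 * n - 7)^2 := by nlinarith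
    calc Real.sqrt (49 - 24 * (eulerChar S : ℝ)) ≤ Real.sqrt ((2 * n - 7)^2) :=
          Real.sqrt_le_sqrt h1
      _ = 2 * n - 7 := Real.sqrt_sq (by linarith)
  rw [ge_iff_le, div_le_iff₀ (by norm_num : (0:ℝ) < 2)]
  linarith
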